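/- For every z ∈ ℂ, the larger-modulus root of the equation (w + w⁻¹)/2 = z satisfies | |z| + √(|z|²−1) | ≤ max(|z + √(z²−1)|, |z − √(z²−1)|) ≤ |z| + √(|z|²+1), where √(|z|²−1) denotes the principal complex square root of the real number |z|²−1 (purely imaginary when |z| < 1) and √(|z|²+1) is the real square root. -/

import Mathlib

/-- The principal (arithmetic) complex square root: the square root with
positive real part, or with zero real part and nonnegative imaginary part. -/
noncomputable def csqrt (z : ℂ) : ℂ := z ^ (1 / 2 : ℂ)

lemma csqrt_sq (z : ℂ) : csqrt z ^ 2 = z := by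
  rw [csqrt, one_div]
  exact_mod_cast Complex.cpow_ofNat_inv_pow z 2

lemma abs_csqrt (z : ℂ) : ‖csqrt z‖ = Real.sqrt ‖z‖ := by
  rw [csqrt, show (1 / 2 : ℂ) = ((1 / 2 : ℝ) : ℂ) by norm_num,
    Complex.norm_cpow_real, Real.sqrt_eq_rpow]

lemma csqrt_ofReal_nonneg {x : ℝ} (hx : 0 ≤ x) :
    csqrt (x : ℂ) = ((Real.sqrt x : ℝ) : ℂ) := by
  rw [csqrt, show (1 / 2 : ℂ) = ((1 / 2 : ℝ) : ℂ) by norm_num,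
    ← Complex.ofReal_cpow hx, Real.sqrt_eq_rpow]

lemma exp_pi_I_half : Complex.exp (↑Real.pi * Complex.I * (1 / 2)) = Complex.I := by
  have : (↑Real.pi * Complex.I * (1 / 2) : ℂ) = (↑(Real.pi / 2) : ℂ) * Complex.I := by
    push_cast; ring
  rw [this, Complex.exp_mul_I, ← Complex.ofReal_cos, ← Complex.ofReal_sin,
    Real.cos_pi_div_two, Real.sin_pi_div_two]
  simp

lemma csqrt_ofReal_nonpos {x : ℝ} (hx : x ≤ 0) :
    csqrt (x : ℂ) = ((Real.sqrt (-x) : ℝ) : ℂ) * Complex.I := by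
  rw [csqrt, Complex.ofReal_cpow_of_nonpos hx, ← Complex.ofReal_neg,
    show ((1 / 2 : ℂ)) = (((1 / 2 : ℝ)) : ℂ) by norm_num,
    ← Complex.ofReal_cpow (by linarith), Real.sqrt_eq_rpow]
  push_cast
  rw [exp_pi_I_half]

/-- Inequality (4.4): the modulus of the larger root of `(w + w⁻¹)/2 = z`
satisfies `||z| + √(|z|²−1)| ≤ max(|z + √(z²−1)|, |z − √(z²−1)|) ≤ |z| + √(|z|²+1)`. -/
theorem stmt9 (z : ℂ) :
    ‖((‖z‖ : ℝ) : ℂ) + csqrt (((‖z‖ : ℝ) ^ 2 - 1 : ℝ) : ℂ)‖ ≤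
      max ‖z + csqrt (z ^ 2 - 1)‖ ‖z - csqrt (z ^ 2 - 1)‖ ∧
    max ‖z + csqrt (z ^ 2 - 1)‖ ‖z - csqrt (z ^ 2 - 1)‖ ≤
      ‖z‖ + Real.sqrt (‖z‖ ^ 2 + 1) := by
  set r := ‖z‖ with hr
  set s := csqrt (z ^ 2 - 1) with hsdef
  set a := ‖z + s‖ with ha
  set b := ‖z - s‖ with hb
  set M := max a b with hM
  have hr0 : 0 ≤ r := norm_nonneg z
  have ha0 : 0 ≤ a := norm_nonneg _
  have hb0 : 0 ≤ b := norm_nonneg _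
  have hM0 : 0 ≤ M := le_trans ha0 (le_max_left a b)
  have haM : a ≤ M := le_max_left a b
  have hbM : b ≤ M := le_max_right a b
  have hs2 : s ^ 2 = z ^ 2 - 1 := csqrt_sq _
  have hprod : a * b = 1 := by
    rw [ha, hb, ← norm_mul]
    have : (z + s) * (z - s) = 1 := by
      have : (z + s) * (z - s) = z ^ 2 - s ^ 2 := by ring
      rw [this, hs2]; ring
    rw [this, norm_one]
  have hsum : 2 * r ≤ a + b := by
    have : ‖2 * z‖ ≤ a + b := by
      have h2z : (2 : ℂ) * z = (z + s) + (z - s) := by ring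
      rw [h2z]; exact norm_add_le _ _
    simpa [norm_mul] using this
  have hMr : r ≤ M := by nlinarith
  have hkey : r ^ 2 - 1 ≤ (M - r) ^ 2 := by nlinarith [mul_nonneg (sub_nonneg.2 haM) (sub_nonneg.2 hbM)]
  constructor
  · rcases le_or_gt 1 r with h1 | h1
    · -- r ≥ 1 : csqrt (r²−1) is real
      have hx : (0 : ℝ) ≤ r ^ 2 - 1 := by nlinarith
      rw [csqrt_ofReal_nonneg hx, ← Complex.ofReal_add, Complex.norm_real, Real.norm_eq_abs,
        abs_of_nonneg (by positivity)]
      have : Real.sqrt (r ^ 2 - 1) ≤ M - r := by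
        calc Real.sqrt (r ^ 2 - 1) ≤ Real.sqrt ((M - r) ^ 2) := Real.sqrt_le_sqrt hkey
        _ = M - r := by rw [Real.sqrt_sq (by linarith)]
      linarith
    · -- r < 1 : csqrt (r²−1) is purely imaginary, LHS = 1
      have hx : r ^ 2 - 1 ≤ 0 := by nlinarith
      rw [csqrt_ofReal_nonpos hx]
      have habs : ‖(r : ℂ) + ↑(Real.sqrt (-(r ^ 2 - 1))) * Complex.I‖ = 1 := by
        rw [Complex.norm_def, Complex.normSq_add_mul_I]
        rw [Real.sq_sqrt (by nlinarith)]
        rw [show r ^ 2 + -(r ^ 2 - 1) = 1 by ring, Real.sqrt_one]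
      rw [habs]
      nlinarith
  · -- upper bound
    have hs_abs : ‖s‖ ≤ Real.sqrt (r ^ 2 + 1) := by
      rw [hsdef, abs_csqrt]
      apply Real.sqrt_le_sqrt
      calc ‖z ^ 2 - 1‖ ≤ ‖z ^ 2‖ + ‖(1 : ℂ)‖ :=
        norm_sub_le _ _
      _ = r ^ 2 + 1 := by rw [norm_pow, norm_one]
    have hA : a ≤ r + Real.sqrt (r ^ 2 + 1) := by
      calc a ≤ ‖z‖ + ‖s‖ := norm_add_le _ _
      _ ≤ r + Real.sqrt (r ^ 2 + 1) := by rw [← hr]; linarith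
    have hB : b ≤ r + Real.sqrt (r ^ 2 + 1) := by
      calc b ≤ ‖z‖ + ‖s‖ := norm_sub_le _ _
      _ ≤ r + Real.sqrt (r ^ 2 + 1) := by rw [← hr]; linarith
    exact max_le hA hB
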